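/- arXiv:0902.2144 — 6 statements merged into one kernel-verified Lean document; each statement's English description precedes it below -/
import Mathlib

section
/- Let P be a shrub, a and a' two vertices of height 0, and suppose there exist height-0 vertices a = a₀, a₁, …, a_ℓ = a' and height-1 vertices b₀, …, b_{ℓ−1} such that b_i covers both a_i and a_{i+1} for each i. Then there exists a single height-1 vertex c covering both a and a'. -/
/-- A shrub on a finite vertex type `V`: a graph together with a height function
satisfying the shrub axioms (edges between consecutive heights, every positive-height
vertex covers a vertex one lower, and the two forbidden induced patterns). -/
structure Shrub (V : Type*) [Fintype V] [DecidableEq V] where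
  adj : V → V → Prop
  symm : ∀ a b, adj a b → adj b a
  loopless : ∀ a, ¬ adj a a
  height : V → ℕ
  edge_height : ∀ a b, adj a b → height a = height b + 1 ∨ height b = height a + 1
  covers_below : ∀ a, 0 < height a → ∃ b, adj a b ∧ height b + 1 = height a
  patternA : ∀ a b c d e, a ≠ b → c ≠ d → c ≠ e → d ≠ e →
    height a = height c + 1 → height b = height c + 1 →
    height d = height c → height e = height c →
    adj a c → adj a d → adj b d → adj b e → ¬ adj a e → ¬ adj b c → False
  patternB : ∀ a b c d, b ≠ c →
    height a = height d + 2 → height b = height d + 1 → height c = height d + 1 →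
    adj a b → adj a c → adj b d → ¬ adj c d → False

variable {V : Type*} [Fintype V] [DecidableEq V]

/-- `P.Covers j i` means the vertex `j` covers `i` : they are joined by an edge and
`j` is one level higher than `i` (edges are oriented downward). -/
def Shrub.Covers (P : Shrub V) (j i : V) : Prop :=
  P.adj i j ∧ P.height i + 1 = P.height j

/-- The underlying simple graph of a shrub. -/
def Shrub.graph (P : Shrub V) : SimpleGraph V where
  Adj := P.adj
  symm := ⟨fun a b h => P.symm a b h⟩
  loopless := ⟨fun a h => P.loopless a h⟩

/-! Forbidding pattern (a) makes "having a common upper cover" a transitive relation on the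
vertices: if `c` covers `x, y` and `b` covers `y, z`, then either `c` covers `z`, or `b` covers
`x`, or the five vertices form pattern (a). Folding this along the zigzag gives the theorem. -/

namespace Shrub

variable (P : Shrub V)

def CommonCover (x y : V) : Prop :=
  ∃ c, P.Covers c x ∧ P.Covers c y

variable {P}

theorem CommonCover.trans {x y z : V} (hxy : P.CommonCover x y) (hyz : P.CommonCover y z) :
    P.CommonCover x z := by
  obtain ⟨c, ⟨hxc, hx⟩, ⟨hyc, hy⟩⟩ := hxy
  obtain ⟨b, ⟨hyb, hy'⟩, ⟨hzb, hz⟩⟩ := hyz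
  by_cases hzc : P.adj z c
  · exact ⟨c, ⟨hxc, hx⟩, hzc, by omega⟩
  by_cases hxb : P.adj x b
  · exact ⟨b, ⟨hxb, by omega⟩, hzb, hz⟩
  exfalso
  refine P.patternA c b x y z ?_ ?_ ?_ ?_ (by omega) (by omega) (by omega) (by omega)
    (P.symm _ _ hxc) (P.symm _ _ hyc) (P.symm _ _ hyb) (P.symm _ _ hzb)
    (mt (P.symm c z) hzc) (mt (P.symm b x) hxb)
  · rintro rfl; exact hxb hxc
  · rintro rfl; exact hxb hyb
  · rintro rfl; exact hzc hxc
  · rintro rfl; exact hzc hyc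

theorem commonCover_of_zigzag {ℓ : ℕ} (aS : Fin (ℓ + 1) → V) (bS : Fin ℓ → V)
    (hcov : ∀ k : Fin ℓ, P.Covers (bS k) (aS k.castSucc) ∧ P.Covers (bS k) (aS k.succ))
    (k : Fin (ℓ + 1)) (hk : k ≠ 0) : P.CommonCover (aS 0) (aS k) := by
  induction k using Fin.induction with
  | zero => exact absurd rfl hk
  | succ i ih =>
    have hstep : P.CommonCover (aS i.castSucc) (aS i.succ) := ⟨bS i, hcov i⟩
    by_cases hi : i.castSucc = 0
    · rwa [hi] at hstep
    · exact (ih hi).trans hstep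

end Shrub

theorem stmt1_general (P : Shrub V) (ℓ : ℕ) (hℓ : 1 ≤ ℓ)
    (aS : Fin (ℓ + 1) → V) (bS : Fin ℓ → V)
    (ha : ∀ k, P.height (aS k) = 0)
    (hcov : ∀ k : Fin ℓ, P.Covers (bS k) (aS k.castSucc) ∧ P.Covers (bS k) (aS k.succ)) :
    ∃ c, P.height c = 1 ∧ P.Covers c (aS 0) ∧ P.Covers c (aS (Fin.last ℓ)) := by
  have hlast : Fin.last ℓ ≠ 0 := by
    rw [Ne, Fin.ext_iff, Fin.val_last, Fin.val_zero]
    omega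
  obtain ⟨c, hc0, hcl⟩ := P.commonCover_of_zigzag aS bS hcov (Fin.last ℓ) hlast
  have hheight := hc0.2
  rw [ha 0] at hheight
  exact ⟨c, hheight.symm, hc0, hcl⟩

/-- given a zigzag of height-1 vertices `b i` each covering the
consecutive height-0 vertices `a i`, `a (i+1)`, there is a single height-1 vertex
covering both endpoints. -/
theorem stmt1 (P : Shrub V) (ℓ : ℕ) (hℓ : 1 ≤ ℓ)
    (aS : Fin (ℓ + 1) → V) (bS : Fin ℓ → V)
    (ha : ∀ k, P.height (aS k) = 0) (hb : ∀ k, P.height (bS k) = 1)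
    (hcov : ∀ k : Fin ℓ, P.Covers (bS k) (aS k.castSucc) ∧ P.Covers (bS k) (aS k.succ)) :
    ∃ c, P.height c = 1 ∧ P.Covers c (aS 0) ∧ P.Covers c (aS (Fin.last ℓ)) :=
  stmt1_general P ℓ hℓ aS bS ha hcov
end

section
/- Let P be a connected shrub with at least two vertices. Then there exists at least one vertex of height 1 that is joined to every vertex of height 0. -/
variable {V : Type*} [Fintype V] [DecidableEq V]

namespace Shrub

variable (P : Shrub V)

def lowerCovers (e : V) : Set V := {x | P.Covers e x}

def IsSiblingClosed (S : Set V) : Prop :=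
  ∀ g x y, P.Covers g x → P.Covers g y → x ∈ S → y ∈ S

variable {P}

theorem lowerCovers_subset_or_subset {e f d : V} (hed : P.Covers e d) (hfd : P.Covers f d) :
    P.lowerCovers e ⊆ P.lowerCovers f ∨ P.lowerCovers f ⊆ P.lowerCovers e := by
  by_contra! h
  obtain ⟨⟨c, hec, hfc⟩, ⟨x, hfx, hex⟩⟩ := Set.not_subset.mp h.1, Set.not_subset.mp h.2
  simp only [lowerCovers, Set.mem_ofPred_eq, Covers] at hec hfc hfx hex
  have hef : e ≠ f := by rintro rfl; exact hfc hec
  have := hed.2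
  have := hfd.2
  refine P.patternA e f c d x hef ?_ ?_ ?_ (by omega) (by omega) (by omega) (by omega)
    (P.symm _ _ hec.1) (P.symm _ _ hed.1) (P.symm _ _ hfd.1) (P.symm _ _ hfx.1)
    (fun h => hex ⟨P.symm _ _ h, by omega⟩) (fun h => hfc ⟨P.symm _ _ h, by omega⟩)
  · rintro rfl; exact hfc ⟨hfd.1, by omega⟩
  · rintro rfl; exact hfc hfx
  · rintro rfl; exact hex ⟨hed.1, by omega⟩

theorem exists_below_of_le_height (u : V) {k : ℕ} (hk : k ≤ P.height u) :
    ∃ x, Relation.ReflTransGen P.Covers u x ∧ P.height x = k := by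
  induction h : P.height u generalizing u with
  | zero => exact ⟨u, .refl, by omega⟩
  | succ n ih =>
    rcases hk.eq_or_lt with hk | hk
    · exact ⟨u, .refl, by omega⟩
    obtain ⟨b, hub, hb⟩ := P.covers_below u (by omega)
    obtain ⟨x, hbx, hx⟩ := ih b (by omega) (by omega)
    exact ⟨x, .head ⟨P.symm _ _ hub, hb⟩ hbx, hx⟩

theorem eq_of_below_of_height_eq_zero {u x : V} (h : Relation.ReflTransGen P.Covers u x)
    (hu : P.height u = 0) : x = u := by
  rcases h.cases_head with rfl | ⟨v, huv, -⟩
  · rfl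
  · have := huv.2; omega

theorem mem_of_below {S : Set V} (hS : P.IsSiblingClosed S) (u : V) {x y : V}
    (hx : Relation.ReflTransGen P.Covers u x) (hy : Relation.ReflTransGen P.Covers u y)
    (hx0 : P.height x = 0) (hy0 : P.height y = 0) (hxS : x ∈ S) : y ∈ S := by
  induction h : P.height u using Nat.strong_induction_on generalizing u x y with
  | _ n ih =>
  rcases Nat.eq_zero_or_pos n with rfl | hpos
  · rwa [eq_of_below_of_height_eq_zero hy h, ← eq_of_below_of_height_eq_zero hx h]
  rcases hx.cases_head with rfl | ⟨v, huv, hvx⟩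
  · omega
  rcases hy.cases_head with rfl | ⟨w, huw, hwy⟩
  · omega
  have hv := huv.2
  have hw := huw.2
  by_cases h1 : n = 1
  · rw [eq_of_below_of_height_eq_zero hvx (by omega)] at hxS
    rw [eq_of_below_of_height_eq_zero hwy (by omega)]
    exact hS u v w huv huw hxS
  obtain ⟨d, hvd, hd⟩ := P.covers_below v (by omega)
  -- pattern (b) with top `u` forces `w` to cover `d` as well
  have hwd : P.adj w d := by
    by_cases hvw : v = w
    · exact hvw ▸ hvd
    by_contra hwd
    exact P.patternB u v w d hvw (by omega) (by omega) (by omega)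
      (P.symm _ _ huv.1) (P.symm _ _ huw.1) hvd hwd
  obtain ⟨z, hdz, hz0⟩ := exists_below_of_le_height (P := P) d (Nat.zero_le _)
  have hzS : z ∈ S := ih _ (by omega) v hvx (.head ⟨P.symm _ _ hvd, hd⟩ hdz) hx0 hz0 hxS rfl
  exact ih _ (by omega) w (.head ⟨P.symm _ _ hwd, by omega⟩ hdz) hwy hz0 hy0 hzS rfl

theorem mem_of_walk {S : Set V} (hS : P.IsSiblingClosed S) {u v : V} (p : P.graph.Walk u v)
    {x y : V} (hx : Relation.ReflTransGen P.Covers u x) (hy : Relation.ReflTransGen P.Covers v y)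
    (hx0 : P.height x = 0) (hy0 : P.height y = 0) (hxS : x ∈ S) : y ∈ S := by
  induction p generalizing x with
  | nil => exact mem_of_below hS _ hx hy hx0 hy0 hxS
  | @cons a b c hab p ih =>
    obtain ⟨z, hz, hz0⟩ := exists_below_of_le_height (P := P) b (Nat.zero_le _)
    refine ih hz hy hz0 ?_
    rcases P.edge_height a b hab with h | h
    · exact mem_of_below hS a hx (.head ⟨P.symm _ _ hab, h.symm⟩ hz) hx0 hz0 hxS
    · exact mem_of_below hS b (.head ⟨hab, h.symm⟩ hx) hz hx0 hz0 hxS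

theorem mem_of_connected {S : Set V} (hS : P.IsSiblingClosed S) (hconn : P.graph.Connected)
    {x y : V} (hx0 : P.height x = 0) (hy0 : P.height y = 0) (hxS : x ∈ S) : y ∈ S :=
  mem_of_walk hS (hconn.preconnected x y).some .refl .refl hx0 hy0 hxS

theorem isSiblingClosed_lowerCovers_of_maximalFor {e : V}
    (he : MaximalFor (fun g => P.height g = P.height e) P.lowerCovers e) :
    P.IsSiblingClosed (P.lowerCovers e) := by
  intro g x y hgx hgy hex
  rcases lowerCovers_subset_or_subset hgx hex with hge | heg
  · exact hge hgy
  · have hg : P.height g = P.height e := by have := hgx.2; have := hex.2; omega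
    exact he.2 hg heg hgy

end Shrub

/-- a connected shrub with at least two vertices has a height-1 vertex
joined to every height-0 vertex. -/
theorem stmt3 (P : Shrub V) (hconn : P.graph.Connected) (hnt : Nontrivial V) :
    ∃ e, P.height e = 1 ∧ ∀ a, P.height a = 0 → P.adj e a := by
  obtain ⟨v⟩ := hconn.nonempty
  obtain ⟨w, hvw⟩ := hconn.preconnected.exists_adj_of_nontrivial v
  obtain ⟨u, hu⟩ : ∃ u, 1 ≤ P.height u := by
    rcases P.edge_height v w hvw with h | h
    exacts [⟨v, by omega⟩, ⟨w, by omega⟩]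
  obtain ⟨e₀, -, he₀⟩ := Shrub.exists_below_of_le_height u hu
  obtain ⟨e, he⟩ := (Set.toFinite {g | P.height g = 1}).exists_maximalFor P.lowerCovers _ ⟨e₀, he₀⟩
  have he1 : P.height e = 1 := he.1
  have hS : P.IsSiblingClosed (P.lowerCovers e) :=
    Shrub.isSiblingClosed_lowerCovers_of_maximalFor (by rwa [he1])
  obtain ⟨b, heb, hb⟩ := P.covers_below e (by omega)
  refine ⟨e, he1, fun a ha => P.symm _ _ ?_⟩
  have hbS : b ∈ P.lowerCovers e := ⟨P.symm _ _ heb, hb⟩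
  exact (Shrub.mem_of_connected hS hconn (by omega) ha hbS).1
end

section
/- Let P be a connected shrub with at least two vertices, and let S be the set of vertices of height 1 that are joined to all vertices of height 0. In the graph obtained from P by removing all edges between S and the vertices of height 0, no vertex of S lies in the same connected component as any vertex of height 0. -/
variable {V : Type*} [Fintype V] [DecidableEq V]

/-!
Call a vertex *grounded* if every vertex of height 0 can be reached from it by a descending
chain of covers. Every vertex of `S` is grounded, and groundedness of vertices of positive
height survives every edge of `G'`: going up is clear, and going down from `u` to `v` works
because pattern B forces any two children of a common vertex to cover the same vertices.
A grounded vertex of height 1 is joined to all of height 0, i.e. lies in `S`, so every edge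
of `G'` from a grounded vertex of positive height leads to a vertex of positive height.
-/

namespace Shrub

variable (P : Shrub V)

lemma covers_of_covers_of_covers {y b c d : V}
    (hyb : P.Covers y b) (hyc : P.Covers y c) (hbd : P.Covers b d) : P.Covers c d := by
  rcases eq_or_ne b c with rfl | hbc
  · exact hbd
  obtain ⟨hby, hb⟩ := hyb
  obtain ⟨hcy, hc⟩ := hyc
  obtain ⟨hdb, hd⟩ := hbd
  refine ⟨?_, by omega⟩
  by_contra hdc
  exact P.patternB y b c d hbc (by omega) (by omega) (by omega)
    (P.symm b y hby) (P.symm c y hcy) (P.symm d b hdb) (fun h => hdc (P.symm c d h))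

lemma eq_of_reflTransGen_covers_of_height_eq_zero {x z : V} (hx : P.height x = 0)
    (h : Relation.ReflTransGen P.Covers x z) : x = z := by
  rcases h.cases_head with rfl | ⟨d, ⟨_, hd⟩, _⟩
  · rfl
  · omega

def Grounded (x : V) : Prop :=
  ∀ z, P.height z = 0 → Relation.ReflTransGen P.Covers x z

variable {P}

lemma grounded_of_forall_adj {s : V} (hs : P.height s = 1)
    (hadj : ∀ a, P.height a = 0 → P.adj s a) : P.Grounded s :=
  fun z hz => .single ⟨P.symm s z (hadj z hz), by omega⟩

namespace Grounded

lemma adj_of_height_eq_one {x : V} (hx : P.Grounded x) (h1 : P.height x = 1)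
    {a : V} (ha : P.height a = 0) : P.adj x a := by
  rcases (hx a ha).cases_head with rfl | ⟨d, hxd, hda⟩
  · omega
  · have hd : P.height d = 0 := by have := hxd.2; omega
    exact P.eq_of_reflTransGen_covers_of_height_eq_zero hd hda ▸ P.symm d x hxd.1

lemma of_covers {u v : V} (hu : P.Grounded u) (hvu : P.Covers v u) : P.Grounded v :=
  fun z hz => .head hvu (hu z hz)

lemma of_covered {u v : V} (hu : P.Grounded u) (huv : P.Covers u v) (hv : 0 < P.height v) :
    P.Grounded v := by
  intro z hz
  rcases (hu z hz).cases_head with rfl | ⟨b, hub, hbz⟩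
  · have := huv.2; omega
  have hb : P.height b = P.height v := by have := hub.2; have := huv.2; omega
  rcases hbz.cases_head with rfl | ⟨d, hbd, hdz⟩
  · omega
  · exact .head (P.covers_of_covers_of_covers hub huv hbd) hdz

lemma of_adj {u v : V} (hu : P.Grounded u) (huv : P.adj u v) (hv : 0 < P.height v) :
    P.Grounded v := by
  rcases P.edge_height u v huv with h | h
  · exact hu.of_covered ⟨P.symm u v huv, h.symm⟩ hv
  · exact hu.of_covers ⟨huv, h.symm⟩

end Grounded

end Shrub

theorem stmt4_general (P : Shrub V)
    (S : Set V) (hS : S = {v | P.height v = 1 ∧ ∀ a, P.height a = 0 → P.adj v a})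
    (G' : SimpleGraph V)
    (hG' : ∀ a b, G'.Adj a b ↔
      (P.adj a b ∧ ¬ ((a ∈ S ∧ P.height b = 0) ∨ (b ∈ S ∧ P.height a = 0)))) :
    ∀ s ∈ S, ∀ a, P.height a = 0 → ¬ G'.Reachable s a := by
  subst hS
  rintro s ⟨hs1, hsadj⟩ a ha hsa
  suffices ∀ x, G'.Reachable s x → 0 < P.height x ∧ P.Grounded x by
    have := (this a hsa).1
    omega
  intro x hsx
  rw [SimpleGraph.reachable_iff_reflTransGen] at hsx
  induction hsx with
  | refl => exact ⟨by omega, Shrub.grounded_of_forall_adj hs1 hsadj⟩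
  | @tail u v _ huv ih =>
    obtain ⟨hu, hgu⟩ := ih
    obtain ⟨hadj, hcut⟩ := (hG' u v).1 huv
    have hv : 0 < P.height v := by
      by_contra! hv0
      have hu1 : P.height u = 1 := by have := P.edge_height u v hadj; omega
      exact hcut (.inl ⟨⟨hu1, fun b hb => hgu.adj_of_height_eq_one hu1 hb⟩, by omega⟩)
    exact ⟨hv, hgu.of_adj hadj hv⟩

/-- let `S` be the set of height-1 vertices joined to all height-0
vertices. After removing all edges between `S` and the height-0 vertices, no vertex
of `S` is in the same connected component as a height-0 vertex. -/
theorem stmt4 (P : Shrub V) (hconn : P.graph.Connected) (hnt : Nontrivial V)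
    (S : Set V) (hS : S = {v | P.height v = 1 ∧ ∀ a, P.height a = 0 → P.adj v a})
    (G' : SimpleGraph V)
    (hG' : ∀ a b, G'.Adj a b ↔
      (P.adj a b ∧ ¬ ((a ∈ S ∧ P.height b = 0) ∨ (b ∈ S ∧ P.height a = 0)))) :
    ∀ s ∈ S, ∀ a, P.height a = 0 → ¬ G'.Reachable s a :=
  stmt4_general P S hS G' hG'
end

section
/- In any shrub with at least two vertices there exists either a leaf (a vertex with exactly one outgoing edge and no incoming edge) or two distinct correlated vertices (vertices having the same set of sources of incoming edges and the same set of targets of outgoing edges). -/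
variable {V : Type*} [Fintype V] [DecidableEq V]

/-- A leaf: a vertex with exactly one outgoing edge (it covers exactly one vertex)
and no incoming edge (nothing covers it). -/
def Shrub.IsLeaf (P : Shrub V) (i : V) : Prop :=
  (∃! j, P.Covers i j) ∧ ∀ k, ¬ P.Covers k i

/-- Two vertices are correlated if they cover the same vertices and are covered by
the same vertices. -/
def Shrub.Correlated (P : Shrub V) (i j : V) : Prop :=
  (∀ x, P.Covers i x ↔ P.Covers j x) ∧ (∀ x, P.Covers x i ↔ P.Covers x j)


/-!
Take a vertex `a` of maximal height whose set of children is smallest among the vertices of that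
height. If that height is `0` there are no edges and any two vertices are correlated. If `a`
covers a single vertex it is a leaf, since nothing covers a vertex of maximal height.
Otherwise let `b ≠ c` be two children of `a`. Pattern (b) forces `b` and `c` to cover the same
vertices. Pattern (a) makes the children sets of two vertices sharing a child comparable, so by
minimality every vertex covering a child of `a` covers all children of `a`; hence `b` and `c` are
also covered by the same vertices.
-/

namespace Shrub

variable (P : Shrub V)

def children (a : V) : Set V := {x | P.Covers a x}

variable {P}

theorem Covers.covers_of_sibling {a b c d : V} (hb : P.Covers a b) (hc : P.Covers a c)
    (hbc : b ≠ c) (hd : P.Covers b d) : P.Covers c d := by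
  obtain ⟨hba, hab⟩ := hb; obtain ⟨hca, hac⟩ := hc; obtain ⟨hdb, hbd⟩ := hd
  refine ⟨?_, by omega⟩
  by_contra hcd
  exact P.patternB a b c d hbc (by omega) (by omega) (by omega)
    (P.symm _ _ hba) (P.symm _ _ hca) (P.symm _ _ hdb) (fun h => hcd (P.symm _ _ h))

theorem children_subset_or_subset {a b d : V} (hab : a ≠ b) (hd₁ : P.Covers a d)
    (hd₂ : P.Covers b d) : P.children a ⊆ P.children b ∨ P.children b ⊆ P.children a := by
  by_contra! h
  obtain ⟨⟨c, hac, hbc⟩, ⟨e, hbe, hae⟩⟩ := Set.not_subset.mp h.1, Set.not_subset.mp h.2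
  simp only [children, Set.mem_ofPred_eq] at hac hbc hbe hae
  have hcd : c ≠ d := by rintro rfl; exact hbc hd₂
  have hce : c ≠ e := by rintro rfl; exact hae hac
  have hde : d ≠ e := by rintro rfl; exact hae hd₁
  have := hac.2; have := hd₁.2; have := hd₂.2; have := hbe.2
  exact P.patternA a b c d e hab hcd hce hde (by omega) (by omega) (by omega) (by omega)
    (P.symm _ _ hac.1) (P.symm _ _ hd₁.1) (P.symm _ _ hd₂.1) (P.symm _ _ hbe.1)
    (fun h => hae ⟨P.symm _ _ h, by omega⟩) (fun h => hbc ⟨P.symm _ _ h, by omega⟩)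

theorem children_subset_of_covers_child {a j x : V}
    (hmin : ∀ v, P.height v = P.height a → (P.children a).ncard ≤ (P.children v).ncard)
    (hax : P.Covers a x) (hjx : P.Covers j x) : P.children a ⊆ P.children j := by
  rcases eq_or_ne a j with rfl | haj
  · exact subset_rfl
  rcases children_subset_or_subset haj hax hjx with hsub | hsub
  · exact hsub
  · exact (Set.eq_of_subset_of_ncard_le hsub
      (hmin j (by have := hax.2; have := hjx.2; omega))).symm.subset

theorem correlated_of_covers_of_covers {a b c : V} (hb : P.Covers a b) (hc : P.Covers a c)
    (hbc : b ≠ c) (hup : ∀ j x, P.Covers a x → P.Covers j x → P.children a ⊆ P.children j) :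
    P.Correlated b c :=
  ⟨fun _ => ⟨hb.covers_of_sibling hc hbc, hc.covers_of_sibling hb hbc.symm⟩,
    fun j => ⟨fun hj => hup j b hb hj hc, fun hj => hup j c hc hj hb⟩⟩

theorem correlated_of_forall_not_covers (h : ∀ i j, ¬ P.Covers i j) (i j : V) :
    P.Correlated i j :=
  ⟨fun _ => iff_of_false (h _ _) (h _ _), fun _ => iff_of_false (h _ _) (h _ _)⟩

end Shrub

/-- every shrub with at least two vertices has a leaf or two distinct
correlated vertices. -/
theorem stmt5 (P : Shrub V) (hnt : Nontrivial V) :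
    (∃ i, P.IsLeaf i) ∨ ∃ i j, i ≠ j ∧ P.Correlated i j := by
  obtain ⟨v₀, v₁, hv⟩ := hnt
  have : Nonempty V := ⟨v₀⟩
  obtain ⟨top, htop⟩ := Finite.exists_max P.height
  obtain ⟨a, ha, hmin⟩ := Set.exists_min_image {v | P.height v = P.height top}
    (fun v => (P.children v).ncard) (Set.toFinite _) ⟨top, rfl⟩
  simp only [Set.mem_ofPred_eq] at ha hmin
  have hmax : ∀ v, P.height v ≤ P.height a := ha ▸ htop
  have hroot : ∀ k, ¬ P.Covers k a := fun k hk => by have := hk.2; have := hmax k; omega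
  rcases Nat.eq_zero_or_pos (P.height a) with h0 | hpos
  · have hnone : ∀ i j, ¬ P.Covers i j := fun i j h => by have := h.2; have := hmax i; omega
    exact Or.inr ⟨v₀, v₁, hv, Shrub.correlated_of_forall_not_covers hnone v₀ v₁⟩
  obtain ⟨b, hab, hb⟩ := P.covers_below a hpos
  have hcovb : P.Covers a b := ⟨P.symm _ _ hab, hb⟩
  by_cases huniq : ∀ c, P.Covers a c → c = b
  · exact Or.inl ⟨a, ⟨b, hcovb, huniq⟩, hroot⟩
  push Not at huniq
  obtain ⟨c, hcovc, hcb⟩ := huniq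
  have hup : ∀ j x, P.Covers a x → P.Covers j x → P.children a ⊆ P.children j :=
    fun j x => Shrub.children_subset_of_covers_child fun v hv => hmin v (hv.trans ha)
  exact Or.inr ⟨b, c, hcb.symm, Shrub.correlated_of_covers_of_covers hcovb hcovc hcb.symm hup⟩
end

section
/- If P is a shrub and i, j are two correlated vertices of P, then the graph obtained by identifying i and j (the quotient graph, with the induced height function) is again a shrub. -/
variable {V : Type*} [Fintype V] [DecidableEq V]

namespace Shrub

variable (P : Shrub V)

def induce (p : V → Prop) [DecidablePred p]
    (hcov : ∀ a, p a → 0 < P.height a → ∃ b, p b ∧ P.adj a b ∧ P.height b + 1 = P.height a) :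
    Shrub {x // p x} where
  adj a b := P.adj a b
  symm a b := P.symm a b
  loopless a := P.loopless a
  height a := P.height a
  edge_height a b := P.edge_height a b
  covers_below a ha :=
    let ⟨b, hb, hab, hba⟩ := hcov a a.2 ha
    ⟨⟨b, hb⟩, hab, hba⟩
  patternA a b c d e hab hcd hce hde :=
    P.patternA a b c d e (Subtype.coe_injective.ne hab) (Subtype.coe_injective.ne hcd)
      (Subtype.coe_injective.ne hce) (Subtype.coe_injective.ne hde)
  patternB a b c d hbc := P.patternB a b c d (Subtype.coe_injective.ne hbc)

theorem adj_iff_covers {a b : V} : P.adj a b ↔ P.Covers a b ∨ P.Covers b a := by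
  constructor
  · intro hab
    rcases P.edge_height a b hab with hba | hab'
    · exact Or.inl ⟨P.symm _ _ hab, hba.symm⟩
    · exact Or.inr ⟨hab, hab'.symm⟩
  · rintro (⟨hba, -⟩ | ⟨hab, -⟩)
    exacts [P.symm _ _ hba, hab]

variable {P} {i j : V}

theorem Correlated.symm (h : P.Correlated i j) : P.Correlated j i :=
  ⟨fun x => (h.1 x).symm, fun x => (h.2 x).symm⟩

theorem Correlated.height_eq_of_pos (h : P.Correlated i j) (hi : 0 < P.height i) :
    P.height i = P.height j := by
  obtain ⟨b, hib, hb⟩ := P.covers_below i hi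
  have hjb : P.Covers j b := (h.1 b).1 ⟨P.symm _ _ hib, hb⟩
  rw [← hb, hjb.2]

theorem Correlated.height_eq (h : P.Correlated i j) : P.height i = P.height j := by
  rcases Nat.eq_zero_or_pos (P.height i) with hi | hi
  · rcases Nat.eq_zero_or_pos (P.height j) with hj | hj
    · rw [hi, hj]
    · exact (h.symm.height_eq_of_pos hj).symm
  · exact h.height_eq_of_pos hi

theorem Correlated.adj_iff (h : P.Correlated i j) (x : V) : P.adj i x ↔ P.adj j x := by
  rw [adj_iff_covers, adj_iff_covers, h.1, h.2]

theorem Correlated.exists_cover_ne (h : P.Correlated i j) (hij : i ≠ j) (a : V)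
    (ha : 0 < P.height a) : ∃ b, b ≠ j ∧ P.adj a b ∧ P.height b + 1 = P.height a := by
  obtain ⟨b, hab, hb⟩ := P.covers_below a ha
  by_cases hbj : b = j
  · subst hbj
    exact ⟨i, hij, P.symm _ _ ((h.adj_iff a).2 (P.symm _ _ hab)), h.height_eq ▸ hb⟩
  · exact ⟨b, hbj, hab, hb⟩

end Shrub

/-- identifying two correlated vertices `i` and `j` of a shrub yields a
shrub; the quotient is realized on the vertices distinct from `j`, the class of
`i`/`j` being represented by `i`, with the induced edges and heights. -/
theorem stmt7 (P : Shrub V) (i j : V) (hij : i ≠ j) (h : P.Correlated i j) :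
    ∃ Q : Shrub {x : V // x ≠ j},
      (∀ a b : {x : V // x ≠ j}, Q.adj a b ↔
        (P.adj ↑a ↑b ∨ ((a : V) = i ∧ P.adj j ↑b) ∨ ((b : V) = i ∧ P.adj ↑a j))) ∧
      (∀ a : {x : V // x ≠ j}, Q.height a = P.height ↑a) := by
  refine ⟨P.induce (· ≠ j) fun a _ => h.exists_cover_ne hij a, fun a b => ?_, fun _ => rfl⟩
  refine ⟨Or.inl, ?_⟩
  rintro (hab | ⟨rfl, hjb⟩ | ⟨rfl, haj⟩)
  · exact hab
  · exact (h.adj_iff b).2 hjb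
  · exact P.symm _ _ ((h.adj_iff a).2 (P.symm _ _ haj))
end

section
/- For every shrub P on vertex set I, the rational function f_P = (1/∏_{i∈I} S(J(P,{i}))) · ∏_{r∈Ram(P)} S(J(P∖J(P,r), r⁻)) / S(J(P, r⁻)) is a reduced fraction which is a product of pairwise distinct linear factors (each factor being a sum of a subset of the variables), i.e. no linear factor appears in both numerator and denominator and none appears twice. -/
variable {V : Type*} [Fintype V] [DecidableEq V]

open Classical

/-- The set of vertices covered by `i`. -/
noncomputable def Shrub.coveredSet (P : Shrub V) (i : V) : Finset V :=
  Finset.univ.filter fun x => P.Covers i x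

/-- The classes of ramified vertices, each class being recorded by the common set
`r⁻` of covered vertices (two ramified vertices are equivalent when they cover the
same set of vertices). -/
noncomputable def Shrub.ramSets (P : Shrub V) : Finset (Finset V) :=
  (Finset.univ.filter fun i => 2 ≤ (P.coveredSet i).card).image P.coveredSet

/-- The class `r` of ramified vertices whose common covered set is `s`. -/
noncomputable def Shrub.ramClass (P : Shrub V) (s : Finset V) : Finset V :=
  Finset.univ.filter fun i => P.coveredSet i = s ∧ 2 ≤ s.card

/-- `P.MaxChainIn A j l` : `j :: l` is a descending chain of covering relations
inside `A` starting at `j` which cannot be extended inside `A` (for `A` the full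
vertex set this means it reaches a height-0 vertex). -/
def Shrub.MaxChainIn (P : Shrub V) (A : Finset V) (j : V) (l : List V) : Prop :=
  (∀ x ∈ j :: l, x ∈ A) ∧ List.Chain' (fun x y => P.Covers x y) (j :: l) ∧
  ∀ y ∈ A, ¬ P.Covers ((j :: l).getLast (List.cons_ne_nil j l)) y

/-- The minimal upper ideal generated by `S` inside the part `A` of the shrub:
the vertices `j ∈ A` all of whose maximal descending chains in `A` meet `S`. -/
noncomputable def Shrub.upIdealIn (P : Shrub V) (A S : Finset V) : Finset V :=
  Finset.univ.filter fun j => j ∈ A ∧ ∀ l : List V, P.MaxChainIn A j l → ∃ s ∈ S, s ∈ j :: l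

/-- The minimal upper ideal generated by `S` in the whole shrub. -/
noncomputable def Shrub.upIdeal (P : Shrub V) (S : Finset V) : Finset V :=
  P.upIdealIn Finset.univ S

/-- The linear factors (each recorded by its set of variables, a factor being the
sum of the corresponding variables) of the numerator of `f_P` : one factor
`S(J(P∖J(P,r), r⁻))` for each class `r` of ramified vertices. -/
noncomputable def numFactors (P : Shrub V) : Multiset (Finset V) :=
  P.ramSets.val.map fun s => P.upIdealIn (Finset.univ \ P.upIdeal (P.ramClass s)) s

/-- The linear factors of the denominator of `f_P` : one factor `S(J(P,{i}))` for
each vertex `i`, and one factor `S(J(P, r⁻))` for each class `r` of ramified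
vertices. -/
noncomputable def denFactors (P : Shrub V) : Multiset (Finset V) :=
  Finset.univ.val.map (fun i : V => P.upIdeal {i}) + P.ramSets.val.map fun s => P.upIdeal s


/-!
Every factor of `f_P` is an upper ideal `J(A, S)` generated, inside a region `A ⊇ S`, by a
nonempty set `S` of vertices of a common height `h`; and `S` is recovered from the ideal as
its set of vertices of height `≤ h`, since every maximal descending chain from a vertex of
the ideal meets `S` at or below that vertex. So factors with different generators differ.
A singleton `{i}` is never some `r⁻`, which has at least two elements. The two factors
`J(P ∖ J(P, r), r⁻)` and `J(P, r⁻)` attached to the same class `r` differ because a vertex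
of `r` lies in the second, but was removed from the region of the first.
-/

namespace Shrub

variable (P : Shrub V)

lemma height_lt_of_isChain {j : V} {l : List V} (h : (j :: l).IsChain P.Covers) :
    ∀ x ∈ l, P.height x < P.height j := by
  let Above : V → V → Prop := fun a b => P.height b < P.height a
  have : Trans Above Above Above := ⟨fun hab hbc => hbc.trans hab⟩
  have hAbove : (j :: l).IsChain Above := h.imp fun a b hab => by
    have := hab.2
    simp only [Above]
    omega
  exact (List.pairwise_cons.mp hAbove.pairwise).1

lemma exists_maxChainIn (A : Finset V) {j : V} (hj : j ∈ A) : ∃ l, P.MaxChainIn A j l := by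
  induction hn : P.height j using Nat.strong_induction_on generalizing j with
  | _ n ih =>
  by_cases hext : ∃ y ∈ A, P.Covers j y
  · obtain ⟨y, hyA, hjy⟩ := hext
    obtain ⟨l, hmem, hchain, hlast⟩ := ih _ (by have := hjy.2; omega) hyA rfl
    refine ⟨y :: l, ?_, List.isChain_cons_cons.mpr ⟨hjy, hchain⟩, ?_⟩
    · simpa [hj] using hmem
    · simpa [List.getLast_cons] using hlast
  · push Not at hext
    exact ⟨[], by simpa using hj, List.isChain_singleton j, by simpa using hext⟩

variable {P} {A S : Finset V} {j : V}

lemma mem_upIdealIn :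
    j ∈ P.upIdealIn A S ↔ j ∈ A ∧ ∀ l, P.MaxChainIn A j l → ∃ s ∈ S, s ∈ j :: l := by
  simp [upIdealIn]

lemma upIdealIn_subset : P.upIdealIn A S ⊆ A := fun _ hj => (mem_upIdealIn.mp hj).1

lemma subset_upIdealIn (hSA : S ⊆ A) : S ⊆ P.upIdealIn A S :=
  fun x hx => mem_upIdealIn.mpr ⟨hSA hx, fun _ _ => ⟨x, hx, List.mem_cons_self⟩⟩

lemma exists_mem_eq_or_height_lt_of_mem_upIdealIn (hj : j ∈ P.upIdealIn A S) :
    ∃ s ∈ S, s = j ∨ P.height s < P.height j := by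
  obtain ⟨hjA, hchains⟩ := mem_upIdealIn.mp hj
  obtain ⟨l, hl⟩ := P.exists_maxChainIn A hjA
  obtain ⟨s, hs, hsl⟩ := hchains l hl
  exact ⟨s, hs, (List.mem_cons.mp hsl).imp id (P.height_lt_of_isChain hl.2.1 s)⟩

variable {h : ℕ}

lemma le_height_of_mem_upIdealIn (hS : ∀ x ∈ S, P.height x = h)
    (hj : j ∈ P.upIdealIn A S) : h ≤ P.height j := by
  obtain ⟨s, hs, rfl | hlt⟩ := exists_mem_eq_or_height_lt_of_mem_upIdealIn hj
  · exact (hS s hs).ge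
  · exact hS s hs ▸ hlt.le

lemma filter_height_le_upIdealIn (hS : ∀ x ∈ S, P.height x = h) (hSA : S ⊆ A) :
    (P.upIdealIn A S).filter (P.height · ≤ h) = S := by
  ext j
  refine ⟨fun hj => ?_, fun hj => Finset.mem_filter.mpr ⟨subset_upIdealIn hSA hj, (hS j hj).le⟩⟩
  obtain ⟨hjI, hjh⟩ := Finset.mem_filter.mp hj
  obtain ⟨s, hs, rfl | hlt⟩ := exists_mem_eq_or_height_lt_of_mem_upIdealIn hjI
  · exact hs
  · have := hS s hs
    omega

lemma eq_of_upIdealIn_eq {A' S' : Finset V} {h' : ℕ}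
    (hS : ∀ x ∈ S, P.height x = h) (hS' : ∀ x ∈ S', P.height x = h')
    (hSA : S ⊆ A) (hSA' : S' ⊆ A') (hne : S.Nonempty) (hne' : S'.Nonempty)
    (heq : P.upIdealIn A S = P.upIdealIn A' S') : S = S' := by
  obtain ⟨x, hx⟩ := hne
  obtain ⟨x', hx'⟩ := hne'
  have hle : h' ≤ h :=
    hS x hx ▸ le_height_of_mem_upIdealIn hS' (heq ▸ subset_upIdealIn hSA hx)
  have hge : h ≤ h' :=
    hS' x' hx' ▸ le_height_of_mem_upIdealIn hS (heq ▸ subset_upIdealIn hSA' hx')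
  obtain rfl := le_antisymm hge hle
  rw [← filter_height_le_upIdealIn hS hSA, heq, filter_height_le_upIdealIn hS' hSA']

lemma upIdeal_singleton_injective : Function.Injective fun i : V => P.upIdeal {i} := by
  intro i i' heq
  refine Finset.singleton_injective (eq_of_upIdealIn_eq (h := P.height i) (h' := P.height i')
    ?_ ?_ (Finset.subset_univ _) (Finset.subset_univ _) (Finset.singleton_nonempty i)
    (Finset.singleton_nonempty i') heq) <;> simp

variable {s : Finset V} {i x : V}

lemma mem_coveredSet : x ∈ P.coveredSet i ↔ P.Covers i x := by
  simp [coveredSet]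

lemma mem_ramSets : s ∈ P.ramSets ↔ ∃ i, P.coveredSet i = s ∧ 2 ≤ s.card := by
  simp only [ramSets, Finset.mem_image, Finset.mem_filter, Finset.mem_univ, true_and]
  exact exists_congr fun i => ⟨fun ⟨hc, hs⟩ => ⟨hs, hs ▸ hc⟩, fun ⟨hs, hc⟩ => ⟨hs ▸ hc, hs⟩⟩

lemma mem_ramClass : i ∈ P.ramClass s ↔ P.coveredSet i = s ∧ 2 ≤ s.card := by
  simp [ramClass]

lemma height_eq_of_mem_coveredSet (hx : x ∈ P.coveredSet i) : P.height x = P.height i - 1 := by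
  have := (mem_coveredSet.mp hx).2
  omega

lemma eq_of_upIdealIn_eq_of_mem_ramSets {A A' s' : Finset V} (hs : s ∈ P.ramSets)
    (hs' : s' ∈ P.ramSets) (hA : s ⊆ A) (hA' : s' ⊆ A')
    (heq : P.upIdealIn A s = P.upIdealIn A' s') : s = s' := by
  obtain ⟨i, rfl, hcard⟩ := mem_ramSets.mp hs
  obtain ⟨i', rfl, hcard'⟩ := mem_ramSets.mp hs'
  exact eq_of_upIdealIn_eq (fun _ => height_eq_of_mem_coveredSet)
    (fun _ => height_eq_of_mem_coveredSet) hA hA' (Finset.card_pos.mp (by omega))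
    (Finset.card_pos.mp (by omega)) heq

lemma upIdealIn_ne_upIdeal_singleton {A : Finset V} (hs : s ∈ P.ramSets) (hA : s ⊆ A) :
    P.upIdealIn A s ≠ P.upIdeal {i} := by
  intro heq
  obtain ⟨i₀, rfl, hcard⟩ := mem_ramSets.mp hs
  have hsingle := eq_of_upIdealIn_eq (fun _ => height_eq_of_mem_coveredSet) (h' := P.height i)
    (by simp) hA (Finset.subset_univ _) (Finset.card_pos.mp (by omega))
    (Finset.singleton_nonempty i) heq
  simp [hsingle] at hcard

lemma subset_compl_upIdeal_ramClass : s ⊆ Finset.univ \ P.upIdeal (P.ramClass s) := by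
  intro x hx
  refine Finset.mem_sdiff.mpr ⟨Finset.mem_univ x, fun hxJ => ?_⟩
  obtain ⟨i, hi, hix⟩ := exists_mem_eq_or_height_lt_of_mem_upIdealIn hxJ
  have hcov := (mem_coveredSet.mp ((mem_ramClass.mp hi).1 ▸ hx)).2
  rcases hix with rfl | hlt <;> omega

lemma mem_upIdeal_coveredSet (hne : (P.coveredSet i).Nonempty) :
    i ∈ P.upIdeal (P.coveredSet i) := by
  refine mem_upIdealIn.mpr ⟨Finset.mem_univ i, fun l hl => ?_⟩
  obtain ⟨y, hy⟩ := hne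
  cases l with
  | nil => exact absurd (mem_coveredSet.mp hy) (by simpa using hl.2.2 y (Finset.mem_univ y))
  | cons y' l =>
    exact ⟨y', mem_coveredSet.mpr (List.isChain_cons_cons.mp hl.2.1).1, by simp⟩

lemma upIdealIn_compl_upIdeal_ramClass_ne (hs : s ∈ P.ramSets) :
    P.upIdealIn (Finset.univ \ P.upIdeal (P.ramClass s)) s ≠ P.upIdeal s := by
  obtain ⟨i, rfl, hcard⟩ := mem_ramSets.mp hs
  intro heq
  have hi : i ∈ P.upIdeal (P.ramClass (P.coveredSet i)) :=
    subset_upIdealIn (Finset.subset_univ _) (mem_ramClass.mpr ⟨rfl, hcard⟩)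
  have hiJ := heq ▸ mem_upIdeal_coveredSet (Finset.card_pos.mp (by omega))
  exact (Finset.mem_sdiff.mp (upIdealIn_subset hiJ)).2 hi

end Shrub

/-- the fraction `f_P` is reduced and a product of pairwise distinct
linear factors: no factor (sum of a subset of the variables) appears twice in the
numerator, none appears twice in the denominator, and no factor appears in both. -/
theorem stmt17 (P : Shrub V) :
    (numFactors P).Nodup ∧ (denFactors P).Nodup ∧
    ∀ t ∈ numFactors P, t ∉ denFactors P := by
  have hcompl (s : Finset V) := P.subset_compl_upIdeal_ramClass (s := s)
  refine ⟨?_, ?_, ?_⟩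
  · exact P.ramSets.nodup.map_on fun s hs s' hs' heq =>
      Shrub.eq_of_upIdealIn_eq_of_mem_ramSets hs hs' (hcompl s) (hcompl s') heq
  · rw [denFactors, Multiset.nodup_add, Multiset.disjoint_left]
    refine ⟨Finset.univ.nodup.map Shrub.upIdeal_singleton_injective,
      P.ramSets.nodup.map_on fun s hs s' hs' heq => Shrub.eq_of_upIdealIn_eq_of_mem_ramSets hs hs'
        (Finset.subset_univ s) (Finset.subset_univ s') heq, ?_⟩
    simp only [Multiset.mem_map, Finset.mem_val]
    rintro _ ⟨i, -, rfl⟩ ⟨s, hs, heq⟩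
    exact Shrub.upIdealIn_ne_upIdeal_singleton hs (Finset.subset_univ s) heq
  · simp only [numFactors, denFactors, Multiset.mem_add, Multiset.mem_map, Finset.mem_val]
    rintro _ ⟨s, hs, rfl⟩ (⟨i, -, heq⟩ | ⟨s', hs', heq⟩)
    · exact Shrub.upIdealIn_ne_upIdeal_singleton hs (hcompl s) heq.symm
    · obtain rfl := Shrub.eq_of_upIdealIn_eq_of_mem_ramSets hs hs' (hcompl s)
        (Finset.subset_univ s') heq.symm
      exact Shrub.upIdealIn_compl_upIdeal_ramClass_ne hs heq.symm
end
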